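/- Define K_{SO(2n+1)}(x,y) := s_{2n}(x−y) − s_{2n}(x+y), where s_m(t) := sin(πmt)/sin(πt) (extended by continuity, with s_m(0) = m). There is an absolute constant C > 0 such that for every integer n ≥ 1 and every interval I ⊆ [0, 1/2]: (i) | ∫_I K_{SO(2n+1)}(x,x) dx − 2n·|I| | ≤ C, and (ii) ∫_{[0,1/2]∖I} ∫_I K_{SO(2n+1)}(x,y)² dx dy ≤ C·log(2 + 2n·|I|). -/

import Mathlib

open Real MeasureTheory

/-- `sKer m t = sin (π m t) / sin (π t)`, extended by continuity where `sin (π t) = 0`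
(at an integer `t = k` the continuous extension has value `m·cos(πmk)/cos(πk)`, which equals
`m·cos(πmt)·cos(πt)` there; in particular `sKer m 0 = m`). -/
noncomputable def sKer (m : ℕ) (t : ℝ) : ℝ :=
  if Real.sin (π * t) = 0 then (m : ℝ) * Real.cos (π * m * t) * Real.cos (π * t)
  else Real.sin (π * m * t) / Real.sin (π * t)

/-- The determinantal kernel of the nontrivial eigenangles of a Haar-random matrix in
`SO(2n+1)`: `K_{SO(2n+1)}(x,y) = s_{2n}(x−y) − s_{2n}(x+y)`. -/
noncomputable def KSOOdd (n : ℕ) (x y : ℝ) : ℝ :=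
  sKer (2 * n) (x - y) - sKer (2 * n) (x + y)

/-!
Everything rests on the expansion `s_{2n}(t) = 2 ∑_{k<n} cos ((2k+1)πt)`.

(i) On the diagonal `K(x,x) = 2n - s_{2n}(2x)`, so `∫_a^b K(x,x) dx - 2n(b-a)` is
`-(G(2πb) - G(2πa))/π` with `G` a partial sum of the Fourier series of the square wave. These
partial sums are bounded on `[0, π]` uniformly in `n`: the first `⌈1/θ⌉` terms are each at most
`θ`, and summation by parts bounds the rest.

(ii) Since `|s_{2n}| ≤ 2n`, `|s_{2n}(t) sin (πt)| ≤ 1` and `|sin π(x ± y)| ≥ 2|x - y|` on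
`[0,1/2]²`, the kernel is dominated by a Lorentzian: `K(x,y)² ≤ 2M²/(1 + M²(x-y)²)`, `M = 4n`.
Its integral over `x ∈ I` is an arctan difference, which is at most `π/2` within distance `1/M`
of `I` and at most `1/(Mw) - 1/(M(w + |I|))` at distance `w ≥ 1/M`; integrating over `w` gives
`(π/2 + log (1 + M|I|))/M` on each side of `I`.
-/

open Finset

theorem sin_two_mul_nat_mul_eq_sum (n : ℕ) (θ : ℝ) :
    sin (2 * n * θ) = 2 * sin θ * ∑ k ∈ range n, cos ((2 * k + 1) * θ) := by
  induction n with
  | zero => simp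
  | succ n ih =>
    have step := sin_sub_sin (2 * (n + 1) * θ) (2 * n * θ)
    rw [show (2 * (n + 1) * θ - 2 * n * θ) / 2 = θ by ring,
      show (2 * (n + 1) * θ + 2 * n * θ) / 2 = (2 * n + 1) * θ by ring] at step
    push_cast
    rw [sum_range_succ]
    linear_combination ih + step

theorem sKer_two_mul_eq_sum (n : ℕ) (t : ℝ) :
    sKer (2 * n) t = 2 * ∑ k ∈ range n, cos ((2 * k + 1) * (π * t)) := by
  unfold sKer
  split_ifs with h
  · obtain ⟨j, hj⟩ := sin_eq_zero_iff.1 h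
    have hcos : ∀ k : ℕ, cos ((2 * k + 1) * (π * t)) = cos (π * t) := fun k => by
      rw [← hj, show (2 * k + 1) * (j * π) = j * π + (k * j : ℤ) * (2 * π) by push_cast; ring,
        cos_add_int_mul_two_pi]
    have hcos_even : cos (π * (2 * n : ℕ) * t) = 1 := by
      rw [show π * (2 * n : ℕ) * t = (n * j : ℤ) * (2 * π) by
        push_cast; linear_combination (-2 * n : ℝ) * hj, cos_int_mul_two_pi]
    simp only [hcos, hcos_even, sum_const, card_range, nsmul_eq_mul]
    push_cast
    ring
  · rw [div_eq_iff h, show π * (2 * n : ℕ) * t = 2 * n * (π * t) by push_cast; ring,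
      sin_two_mul_nat_mul_eq_sum]
    ring

theorem continuous_sKer_two_mul (n : ℕ) : Continuous (sKer (2 * n)) := by
  simp only [funext (sKer_two_mul_eq_sum n)]
  fun_prop

theorem abs_sKer_two_mul_le (n : ℕ) (t : ℝ) : |sKer (2 * n) t| ≤ 2 * n := by
  rw [sKer_two_mul_eq_sum, abs_mul, abs_two]
  calc 2 * |∑ k ∈ range n, cos ((2 * k + 1) * (π * t))|
      ≤ 2 * ∑ k ∈ range n, |cos ((2 * k + 1) * (π * t))| := by gcongr; exact abs_sum_le_sum_abs _ _
    _ ≤ 2 * ∑ _k ∈ range n, (1 : ℝ) := by gcongr; exact abs_cos_le_one _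
    _ = 2 * n := by simp

theorem abs_sKer_mul_abs_sin_le_one (m : ℕ) (t : ℝ) : |sKer m t| * |sin (π * t)| ≤ 1 := by
  unfold sKer
  split_ifs with h
  · simp [h]
  · rw [abs_div, div_mul_cancel₀ _ (abs_ne_zero.2 h)]
    exact abs_sin_le_one _

theorem two_mul_abs_le_abs_sin_pi_mul {u : ℝ} (hu : |u| ≤ 1 / 2) : 2 * |u| ≤ |sin (π * u)| := by
  have jordan := mul_le_sin (abs_nonneg (π * u))
    (by rw [abs_mul, abs_of_pos pi_pos]; nlinarith [pi_pos])
  rw [abs_mul, abs_of_pos pi_pos, ← mul_assoc, div_mul_cancel₀ _ pi_ne_zero] at jordan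
  rcases abs_cases u with ⟨habs, -⟩ | ⟨habs, -⟩ <;> rw [habs] at jordan ⊢
  · exact jordan.trans (le_abs_self _)
  · rw [mul_neg, mul_neg, sin_neg] at jordan
    linarith [neg_le_abs (sin (π * u))]

theorem abs_sin_pi_mul_sub_le_abs_sin_pi_mul_add {x y : ℝ} (hx : x ∈ Set.Icc (0 : ℝ) (1 / 2))
    (hy : y ∈ Set.Icc (0 : ℝ) (1 / 2)) : |sin (π * (x - y))| ≤ |sin (π * (x + y))| := by
  have hx' : 0 ≤ sin (2 * (π * x)) := sin_nonneg_of_nonneg_of_le_pi (by nlinarith [pi_pos, hx.1])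
    (by nlinarith [pi_pos, hx.2])
  have hy' : 0 ≤ sin (2 * (π * y)) := sin_nonneg_of_nonneg_of_le_pi (by nlinarith [pi_pos, hy.1])
    (by nlinarith [pi_pos, hy.2])
  have key : sin (π * (x + y)) ^ 2 - sin (π * (x - y)) ^ 2
      = sin (2 * (π * x)) * sin (2 * (π * y)) := by
    rw [mul_add, mul_sub, sin_add, sin_sub, sin_two_mul, sin_two_mul]
    ring
  exact sq_le_sq.1 (by nlinarith [mul_nonneg hx' hy'])

theorem abs_KSOOdd_le (n : ℕ) (x y : ℝ) : |KSOOdd n x y| ≤ 4 * n := by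
  unfold KSOOdd
  linarith [abs_sub (sKer (2 * n) (x - y)) (sKer (2 * n) (x + y)), abs_sKer_two_mul_le n (x - y),
    abs_sKer_two_mul_le n (x + y)]

theorem abs_KSOOdd_mul_abs_sub_le_one (n : ℕ) {x y : ℝ} (hx : x ∈ Set.Icc (0 : ℝ) (1 / 2))
    (hy : y ∈ Set.Icc (0 : ℝ) (1 / 2)) : |KSOOdd n x y| * |x - y| ≤ 1 := by
  have hsub : 2 * |x - y| ≤ |sin (π * (x - y))| := two_mul_abs_le_abs_sin_pi_mul
    (abs_sub_le_iff.2 ⟨by linarith [hx.2, hy.1], by linarith [hx.1, hy.2]⟩)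
  have hadd := hsub.trans (abs_sin_pi_mul_sub_le_abs_sin_pi_mul_add hx hy)
  have h₁ := abs_sKer_mul_abs_sin_le_one (2 * n) (x - y)
  have h₂ := abs_sKer_mul_abs_sin_le_one (2 * n) (x + y)
  have hK := abs_sub (sKer (2 * n) (x - y)) (sKer (2 * n) (x + y))
  unfold KSOOdd
  nlinarith [abs_nonneg (sKer (2 * n) (x - y)), abs_nonneg (sKer (2 * n) (x + y)),
    abs_nonneg (x - y)]

theorem sq_mul_one_add_sq_le {u A c : ℝ} (huA : |u| ≤ A) (huc : |u| * c ≤ 1) (hc : 0 ≤ c) :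
    u ^ 2 * (1 + (A * c) ^ 2) ≤ 2 * A ^ 2 := by
  have hA : 0 ≤ A := (abs_nonneg u).trans huA
  have h₁ : u ^ 2 ≤ A ^ 2 := sq_le_sq' (neg_le_of_abs_le huA) (le_of_abs_le huA)
  have h₂ : (|u| * c) ^ 2 ≤ 1 := by nlinarith [mul_nonneg (abs_nonneg u) hc]
  have h₃ : u ^ 2 * (A * c) ^ 2 = A ^ 2 * (|u| * c) ^ 2 := by rw [← sq_abs u]; ring
  nlinarith [sq_nonneg A]

theorem KSOOdd_sq_le (n : ℕ) {x y : ℝ} (hx : x ∈ Set.Icc (0 : ℝ) (1 / 2))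
    (hy : y ∈ Set.Icc (0 : ℝ) (1 / 2)) :
    KSOOdd n x y ^ 2 ≤ 2 * (4 * n) ^ 2 / (1 + (4 * n * (x - y)) ^ 2) := by
  rw [le_div_iff₀ (by positivity), ← sq_abs (4 * n * (x - y)), abs_mul,
    abs_of_nonneg (by positivity : (0 : ℝ) ≤ 4 * n)]
  exact sq_mul_one_add_sq_le (abs_KSOOdd_le n x y) (abs_KSOOdd_mul_abs_sub_le_one n hx hy)
    (abs_nonneg _)

/-- Partial sums of the Fourier series of the square wave `(π/4) · sign (sin θ)`. -/
noncomputable def squareWaveSum (n : ℕ) (θ : ℝ) : ℝ :=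
  ∑ k ∈ range n, sin ((2 * k + 1) * θ) / (2 * k + 1)

theorem hasDerivAt_squareWaveSum (n : ℕ) (θ : ℝ) :
    HasDerivAt (squareWaveSum n) (∑ k ∈ range n, cos ((2 * k + 1) * θ)) θ := by
  unfold squareWaveSum
  refine HasDerivAt.fun_sum fun k _ => ?_
  have hk : (2 * k + 1 : ℝ) ≠ 0 := by positivity
  refine ((((hasDerivAt_id θ).const_mul (2 * k + 1 : ℝ)).sin).div_const _).congr_deriv ?_
  field_simp
  rfl

theorem abs_sum_Ico_sub_mul_add_le {c a : ℕ → ℝ} (hc : ∀ k, |c k| ≤ 1) (ha : Antitone a)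
    {K N : ℕ} (hKN : K ≤ N) :
    |(∑ k ∈ Ico K N, (c k - c (k + 1)) * a k) - c K * a K + c N * a N| ≤ a K - a N := by
  induction N, hKN using Nat.le_induction with
  | base => simp
  | succ N hKN ih =>
    have hstep : |c (N + 1) * (a (N + 1) - a N)| ≤ a N - a (N + 1) := by
      rw [abs_mul, abs_sub_comm, abs_of_nonneg (sub_nonneg.2 (ha N.le_succ))]
      exact mul_le_of_le_one_left (sub_nonneg.2 (ha N.le_succ)) (hc _)
    rw [sum_Ico_succ_top hKN]
    calc _ = |((∑ k ∈ Ico K N, (c k - c (k + 1)) * a k) - c K * a K + c N * a N)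
          + c (N + 1) * (a (N + 1) - a N)| := by ring_nf
      _ ≤ _ := abs_add_le _ _
      _ ≤ a K - a (N + 1) := by linarith

/-- Summation by parts, as in the Dirichlet test. -/
theorem abs_sum_Ico_sub_mul_le {c a : ℕ → ℝ} (hc : ∀ k, |c k| ≤ 1) (ha : Antitone a)
    (ha₀ : ∀ k, 0 ≤ a k) (K N : ℕ) :
    |∑ k ∈ Ico K N, (c k - c (k + 1)) * a k| ≤ 2 * a K := by
  rcases le_or_gt K N with hKN | hNK
  · have hK : |c K * a K| ≤ a K := by
      rw [abs_mul, abs_of_nonneg (ha₀ K)]; exact mul_le_of_le_one_left (ha₀ K) (hc K)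
    have hN : |c N * a N| ≤ a N := by
      rw [abs_mul, abs_of_nonneg (ha₀ N)]; exact mul_le_of_le_one_left (ha₀ N) (hc N)
    have := abs_sum_Ico_sub_mul_add_le hc ha hKN
    rw [abs_le] at *
    constructor <;> linarith
  · simp [Ico_eq_empty_of_le hNK.le, ha₀ K]

theorem abs_sum_range_sin_odd_div_le {θ : ℝ} (hθ : 0 ≤ θ) (N : ℕ) :
    |∑ k ∈ range N, sin ((2 * k + 1) * θ) / (2 * k + 1)| ≤ N * θ := by
  refine (abs_sum_le_sum_abs _ _).trans ?_
  calc ∑ k ∈ range N, |sin ((2 * k + 1) * θ) / (2 * k + 1)|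
      ≤ ∑ _k ∈ range N, θ := sum_le_sum fun k _ => by
        have hk : (0 : ℝ) < 2 * k + 1 := by positivity
        rw [abs_div, abs_of_pos hk, div_le_iff₀ hk]
        calc |sin ((2 * k + 1) * θ)| ≤ |(2 * k + 1) * θ| := abs_sin_le_abs
          _ = θ * (2 * k + 1) := by rw [abs_of_nonneg (by positivity), mul_comm]
    _ = N * θ := by simp

theorem abs_sum_Ico_sin_odd_div_le {θ : ℝ} (hθ₀ : 0 < θ) (hθ : θ ≤ π / 2) {K : ℕ}
    (hK : 1 ≤ K * θ) (N : ℕ) :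
    |∑ k ∈ Ico K N, sin ((2 * k + 1) * θ) / (2 * k + 1)| ≤ π / 4 := by
  have hsin : 2 / π * θ ≤ sin θ := mul_le_sin hθ₀.le hθ
  have hsin₀ : 0 < sin θ := lt_of_lt_of_le (by positivity) hsin
  have hterm : ∀ k : ℕ, sin ((2 * k + 1) * θ) / (2 * k + 1)
      = (2 * sin θ)⁻¹ * ((cos (2 * k * θ) - cos (2 * (k + 1 : ℕ) * θ)) * (2 * k + 1 : ℝ)⁻¹) := by
    intro k
    rw [cos_sub_cos,
      show (2 * k * θ + 2 * (k + 1 : ℕ) * θ) / 2 = (2 * k + 1) * θ by push_cast; ring,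
      show (2 * k * θ - 2 * (k + 1 : ℕ) * θ) / 2 = -θ by push_cast; ring, sin_neg]
    field_simp
  have habel := abs_sum_Ico_sub_mul_le (c := fun k : ℕ => cos (2 * k * θ))
    (a := fun k : ℕ => (2 * k + 1 : ℝ)⁻¹) (fun _ => abs_cos_le_one _)
    (fun _ _ hij => inv_anti₀ (by positivity) (by gcongr)) (fun _ => by positivity) K N
  simp only [hterm, ← mul_sum, abs_mul, abs_inv, abs_of_pos (by positivity : 0 < 2 * sin θ)]
  have hK' : (2 * K + 1 : ℝ)⁻¹ ≤ θ / 2 := by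
    rw [inv_le_comm₀ (by positivity) (by positivity), inv_div, div_le_iff₀ hθ₀]
    linarith
  calc (2 * sin θ)⁻¹ * |∑ k ∈ Ico K N, (cos (2 * k * θ) - cos (2 * (k + 1 : ℕ) * θ)) *
        (2 * k + 1 : ℝ)⁻¹| ≤ (2 * sin θ)⁻¹ * (2 * (θ / 2)) := by
          gcongr; exact habel.trans (by linarith)
    _ ≤ (2 * (2 / π * θ))⁻¹ * (2 * (θ / 2)) := by gcongr
    _ = π / 4 := by field_simp; ring

theorem abs_squareWaveSum_le_of_le_pi_div_two (n : ℕ) {θ : ℝ} (hθ₀ : 0 ≤ θ) (hθ : θ ≤ π / 2) :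
    |squareWaveSum n θ| ≤ 4 := by
  rcases hθ₀.eq_or_lt with rfl | hθ₀
  · simp [squareWaveSum]
  set K := ⌈θ⁻¹⌉₊
  have hKθ : 1 ≤ K * θ := by
    rw [← div_le_iff₀ hθ₀, one_div]; exact Nat.le_ceil _
  have hKθ' : K * θ ≤ 1 + π / 2 := by
    have := Nat.ceil_lt_add_one (inv_nonneg.2 hθ₀.le)
    calc K * θ ≤ (θ⁻¹ + 1) * θ := by gcongr
      _ = 1 + θ := by field_simp
      _ ≤ 1 + π / 2 := by linarith
  have hπ := pi_le_four
  unfold squareWaveSum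
  rcases le_total n K with hnK | hKn
  · calc _ ≤ n * θ := abs_sum_range_sin_odd_div_le hθ₀.le n
      _ ≤ K * θ := by gcongr
      _ ≤ 4 := by linarith
  · rw [← sum_range_add_sum_Ico _ hKn]
    have := abs_sum_range_sin_odd_div_le hθ₀.le K
    have := abs_sum_Ico_sin_odd_div_le hθ₀ hθ hKθ n
    exact (abs_add_le _ _).trans (by linarith)

theorem squareWaveSum_pi_sub (n : ℕ) (θ : ℝ) : squareWaveSum n (π - θ) = squareWaveSum n θ := by
  refine sum_congr rfl fun k _ => ?_
  rw [show (2 * k + 1) * (π - θ) = (π - (2 * k + 1) * θ) + k * (2 * π) by ring,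
    sin_add_nat_mul_two_pi, sin_pi_sub]

theorem abs_squareWaveSum_le (n : ℕ) {θ : ℝ} (hθ₀ : 0 ≤ θ) (hθ : θ ≤ π) :
    |squareWaveSum n θ| ≤ 4 := by
  rcases le_total θ (π / 2) with h | h
  · exact abs_squareWaveSum_le_of_le_pi_div_two n hθ₀ h
  · rw [← squareWaveSum_pi_sub]
    exact abs_squareWaveSum_le_of_le_pi_div_two n (by linarith) (by linarith)

theorem KSOOdd_self_eq (n : ℕ) (x : ℝ) :
    KSOOdd n x x = 2 * n - 2 * ∑ k ∈ range n, cos ((2 * k + 1) * (2 * π * x)) := by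
  simp only [KSOOdd, sKer_two_mul_eq_sum, sub_self, mul_zero, cos_zero, sum_const, card_range,
    nsmul_eq_mul, mul_one]
  congr 2
  exact sum_congr rfl fun k _ => by ring_nf

theorem integral_KSOOdd_self (n : ℕ) (a b : ℝ) :
    ∫ x in a..b, KSOOdd n x x
      = 2 * n * (b - a) - (squareWaveSum n (2 * π * b) - squareWaveSum n (2 * π * a)) / π := by
  have hderiv : ∀ x ∈ Set.uIcc a b,
      HasDerivAt (fun x => 2 * n * x - squareWaveSum n (2 * π * x) / π) (KSOOdd n x x) x := by
    intro x _
    have := (((hasDerivAt_squareWaveSum n (2 * π * x)).comp x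
      ((hasDerivAt_id x).const_mul (2 * π))).div_const π)
    refine (((hasDerivAt_id x).const_mul (2 * n : ℝ)).sub this).congr_deriv ?_
    rw [KSOOdd_self_eq]
    generalize ∑ k ∈ range n, cos ((2 * k + 1) * (2 * π * x)) = S
    field_simp
  have hcont : Continuous fun x => KSOOdd n x x := by
    unfold KSOOdd; have := continuous_sKer_two_mul n; fun_prop
  rw [intervalIntegral.integral_eq_sub_of_hasDerivAt hderiv (hcont.intervalIntegrable a b)]
  ring

theorem abs_integral_KSOOdd_self_sub_le (n : ℕ) {a b : ℝ} (ha : 0 ≤ a) (hab : a ≤ b)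
    (hb : b ≤ 1 / 2) : |(∫ x in a..b, KSOOdd n x x) - 2 * n * (b - a)| ≤ 3 := by
  have hπ := pi_gt_three
  have hGa := abs_squareWaveSum_le n (θ := 2 * π * a) (by positivity) (by nlinarith)
  have hGb := abs_squareWaveSum_le n (θ := 2 * π * b) (by nlinarith) (by nlinarith)
  rw [integral_KSOOdd_self, sub_sub_cancel_left, abs_neg, abs_div, abs_of_pos pi_pos,
    div_le_iff₀ pi_pos]
  linarith [abs_sub (squareWaveSum n (2 * π * b)) (squareWaveSum n (2 * π * a))]

theorem arctan_le_self {z : ℝ} (hz : 0 ≤ z) : arctan z ≤ z := by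
  simpa only [tan_arctan] using le_tan (arctan_nonneg.2 hz) (arctan_lt_pi_div_two z)

theorem arctan_sub_arctan_le_pi_div_two (p : ℝ) {q : ℝ} (hq : 0 ≤ q) :
    arctan p - arctan q ≤ π / 2 := by
  linarith [arctan_lt_pi_div_two p, arctan_nonneg.2 hq]

theorem arctan_sub_arctan_le_inv_sub_inv {p q : ℝ} (hq : 0 < q) (hqp : q ≤ p) :
    arctan p - arctan q ≤ q⁻¹ - p⁻¹ := by
  have hp : 0 < p := hq.trans_le hqp
  have hsub : arctan p - arctan q = arctan ((p - q) / (1 + p * q)) := by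
    have := arctan_add (x := p) (y := -q) (by nlinarith)
    rw [arctan_neg, ← sub_eq_add_neg, ← sub_eq_add_neg, mul_neg, sub_neg_eq_add] at this
    exact this
  calc arctan p - arctan q ≤ (p - q) / (1 + p * q) := by
        rw [hsub]; exact arctan_le_self (by have := sub_nonneg.2 hqp; positivity)
    _ ≤ (p - q) / (p * q) := by gcongr; linarith
    _ = q⁻¹ - p⁻¹ := by field_simp

/-- The mass `∫_w^{w+L} M / (1 + (M x)²) dx` of the Lorentzian of width `1/M` on `[w, w + L]`. -/
noncomputable def lorentzMass (M L w : ℝ) : ℝ := arctan (M * (w + L)) - arctan (M * w)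

theorem continuous_lorentzMass (M L : ℝ) : Continuous (lorentzMass M L) := by
  unfold lorentzMass; fun_prop

theorem lorentzMass_nonneg {M L w : ℝ} (hM : 0 ≤ M) (hL : 0 ≤ L) : 0 ≤ lorentzMass M L w :=
  sub_nonneg.2 (arctan_strictMono.monotone (by nlinarith))

theorem integral_inv_sub_inv_add_le {c T L : ℝ} (hc : 0 < c) (hcT : c ≤ T) (hL : 0 ≤ L) :
    ∫ w in c..T, (w⁻¹ - (w + L)⁻¹) ≤ log (1 + L / c) := by
  have hT : 0 < T := hc.trans_le hcT
  have hint : ∀ d, 0 ≤ d → IntervalIntegrable (fun w : ℝ => (w + d)⁻¹) volume c T := fun d hd =>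
    ContinuousOn.intervalIntegrable <| ContinuousOn.inv₀ (f := fun w => w + d) (by fun_prop)
      fun w hw => by rw [Set.uIcc_of_le hcT] at hw; linarith [hw.1]
  rw [intervalIntegral.integral_sub (by simpa using hint 0 le_rfl) (hint L hL),
    intervalIntegral.integral_comp_add_right (fun w => w⁻¹), integral_inv_of_pos hc hT,
    integral_inv_of_pos (by linarith) (by linarith), log_div hT.ne' hc.ne',
    log_div (by linarith) (by linarith), show 1 + L / c = (c + L) / c by field_simp,
    log_div (by linarith) hc.ne']
  linarith [log_le_log hT (by linarith : T ≤ T + L)]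

theorem integral_lorentzMass_le {M L T : ℝ} (hM : 0 < M) (hL : 0 ≤ L) (hT : 0 ≤ T) :
    ∫ w in (0 : ℝ)..T, lorentzMass M L w ≤ (π / 2 + log (1 + M * L)) / M := by
  set T' := max T M⁻¹
  have hint : ∀ a b, IntervalIntegrable (lorentzMass M L) volume a b :=
    (continuous_lorentzMass M L).intervalIntegrable
  have hextend : ∫ w in (0 : ℝ)..T, lorentzMass M L w ≤ ∫ w in (0 : ℝ)..T', lorentzMass M L w :=
    intervalIntegral.integral_mono_interval le_rfl hT (le_max_left _ _)
      (Filter.Eventually.of_forall fun _ => lorentzMass_nonneg hM.le hL) (hint _ _)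
  have hnear : ∫ w in (0 : ℝ)..M⁻¹, lorentzMass M L w ≤ π / 2 / M := by
    calc _ ≤ ∫ w in (0 : ℝ)..M⁻¹, π / 2 := intervalIntegral.integral_mono_on (by positivity)
          (hint _ _) intervalIntegrable_const fun w hw =>
            arctan_sub_arctan_le_pi_div_two _ (mul_nonneg hM.le hw.1)
      _ = π / 2 / M := by rw [intervalIntegral.integral_const, smul_eq_mul, sub_zero]; field_simp
  have hfar : ∫ w in M⁻¹..T', lorentzMass M L w ≤ log (1 + M * L) / M := by
    have hinv : IntervalIntegrable (fun w : ℝ => M⁻¹ * (w⁻¹ - (w + L)⁻¹)) volume M⁻¹ T' := by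
      have hpos : ∀ w ∈ Set.uIcc M⁻¹ T', 0 < w := fun w hw => by
        rw [Set.uIcc_of_le (le_max_right _ _)] at hw
        exact lt_of_lt_of_le (by positivity) hw.1
      refine ContinuousOn.intervalIntegrable (continuousOn_const.mul (ContinuousOn.sub ?_ ?_))
      · exact ContinuousOn.inv₀ (f := fun w => w) (by fun_prop) fun w hw => (hpos w hw).ne'
      · exact ContinuousOn.inv₀ (f := fun w => w + L) (by fun_prop) fun w hw =>
          (add_pos_of_pos_of_nonneg (hpos w hw) hL).ne'
    calc _ ≤ ∫ w in M⁻¹..T', M⁻¹ * (w⁻¹ - (w + L)⁻¹) :=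
          intervalIntegral.integral_mono_on (le_max_right _ _) (hint _ _) hinv fun w hw => by
            have hw₀ : 0 < w := lt_of_lt_of_le (by positivity) hw.1
            have := arctan_sub_arctan_le_inv_sub_inv (mul_pos hM hw₀)
              (by nlinarith : M * w ≤ M * (w + L))
            rwa [mul_inv, mul_inv, ← mul_sub] at this
      _ ≤ M⁻¹ * log (1 + L / M⁻¹) := by
          rw [intervalIntegral.integral_const_mul]
          gcongr
          exact integral_inv_sub_inv_add_le (by positivity) (le_max_right _ _) hL
      _ = log (1 + M * L) / M := by rw [div_inv_eq_mul, mul_comm L, inv_mul_eq_div]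
  rw [← intervalIntegral.integral_add_adjacent_intervals (hint 0 M⁻¹) (hint M⁻¹ T')] at hextend
  rw [add_div]
  linarith

theorem integral_lorentzian (M y a b : ℝ) :
    ∫ x in a..b, M / (1 + (M * (x - y)) ^ 2) = arctan (M * (b - y)) - arctan (M * (a - y)) := by
  have hcont : Continuous fun x => M / (1 + (M * (x - y)) ^ 2) :=
    continuous_const.div (by fun_prop) fun x => by positivity
  refine intervalIntegral.integral_eq_sub_of_hasDerivAt (f := fun x => arctan (M * (x - y)))
    (fun x _ => ?_) (hcont.intervalIntegrable a b)
  refine ((((hasDerivAt_id x).sub_const y).const_mul M).arctan).congr_deriv ?_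
  simp only [id, mul_one]
  field_simp

theorem setIntegral_Icc_diff_Icc_arctan_sub_le {M a b : ℝ} (hM : 0 < M) (ha : 0 ≤ a)
    (hab : a ≤ b) (hb : b ≤ 1 / 2) :
    ∫ y in Set.Icc (0 : ℝ) (1 / 2) \ Set.Icc a b, (arctan (M * (b - y)) - arctan (M * (a - y)))
      ≤ 2 * ((π / 2 + log (1 + M * (b - a))) / M) := by
  set g : ℝ → ℝ := fun y => arctan (M * (b - y)) - arctan (M * (a - y))
  have hg : Continuous g := by fun_prop
  have hg₀ : ∀ y, 0 ≤ g y := fun y => sub_nonneg.2 (arctan_strictMono.monotone (by nlinarith))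
  have hleft : g = fun y => lorentzMass M (b - a) (a - y) := by
    funext y; simp only [g, lorentzMass]; ring_nf
  have hright : g = fun y => lorentzMass M (b - a) (y - b) := by
    funext y
    simp only [g, lorentzMass, show M * (b - y) = -(M * (y - b)) by ring,
      show M * (a - y) = -(M * (y - b + (b - a))) by ring, arctan_neg]
    ring
  have hsubset : Set.Icc (0 : ℝ) (1 / 2) \ Set.Icc a b ⊆ Set.Ico 0 a ∪ Set.Icc b (1 / 2) := by
    rintro y ⟨⟨hy₀, hy₁⟩, hy⟩
    by_cases hya : y < a
    · exact Or.inl ⟨hy₀, hya⟩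
    · exact Or.inr ⟨(lt_of_not_ge fun hyb => hy ⟨not_lt.1 hya, hyb⟩).le, hy₁⟩
  have hdisj : Disjoint (Set.Ico (0 : ℝ) a) (Set.Icc b (1 / 2)) :=
    Set.disjoint_left.2 fun y hy hy' => by linarith [hy.2, hy'.1]
  have hL : 0 ≤ b - a := sub_nonneg.2 hab
  calc ∫ y in Set.Icc (0 : ℝ) (1 / 2) \ Set.Icc a b, g y
      ≤ ∫ y in Set.Ico 0 a ∪ Set.Icc b (1 / 2), g y :=
        setIntegral_mono_set ((hg.integrableOn_Icc (a := 0) (b := 1 / 2)).mono_set (by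
          rintro y (hy | hy) <;> constructor <;> linarith [hy.1, hy.2]))
          (Filter.Eventually.of_forall hg₀) hsubset.eventuallyLE
    _ = (∫ y in (0 : ℝ)..a, g y) + ∫ y in b..1 / 2, g y := by
        rw [setIntegral_union hdisj measurableSet_Icc
          (hg.integrableOn_Icc.mono_set Set.Ico_subset_Icc_self) hg.integrableOn_Icc,
          integral_Ico_eq_integral_Ioc,
          integral_Icc_eq_integral_Ioc, ← intervalIntegral.integral_of_le ha,
          ← intervalIntegral.integral_of_le hb]
    _ = (∫ w in (0 : ℝ)..a, lorentzMass M (b - a) w)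
          + ∫ w in (0 : ℝ)..1 / 2 - b, lorentzMass M (b - a) w := by
        congr 1
        · rw [hleft, intervalIntegral.integral_comp_sub_left (lorentzMass M (b - a)), sub_self,
            sub_zero]
        · rw [hright, intervalIntegral.integral_comp_sub_right (lorentzMass M (b - a)), sub_self]
    _ ≤ 2 * ((π / 2 + log (1 + M * (b - a))) / M) := by
        linarith [integral_lorentzMass_le hM hL ha,
          integral_lorentzMass_le hM hL (sub_nonneg.2 hb)]

theorem setIntegral_Icc_diff_Icc_setIntegral_KSOOdd_sq_le {n : ℕ} (hn : 1 ≤ n) {a b : ℝ}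
    (ha : 0 ≤ a) (hab : a ≤ b) (hb : b ≤ 1 / 2) :
    ∫ y in Set.Icc (0 : ℝ) (1 / 2) \ Set.Icc a b, ∫ x in Set.Icc a b, KSOOdd n x y ^ 2
      ≤ 4 * (π / 2 + log (1 + 4 * n * (b - a))) := by
  set M : ℝ := 4 * n
  have hM : 0 < M := by positivity
  have hinner : ∀ y ∈ Set.Icc (0 : ℝ) (1 / 2), ∫ x in Set.Icc a b, KSOOdd n x y ^ 2
      ≤ 2 * M * (arctan (M * (b - y)) - arctan (M * (a - y))) := fun y hy => by
    rw [← integral_lorentzian, ← intervalIntegral.integral_const_mul,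
      intervalIntegral.integral_of_le hab, ← integral_Icc_eq_integral_Ioc]
    refine integral_mono_of_nonneg (Filter.Eventually.of_forall fun _ => sq_nonneg _)
      (Continuous.integrableOn_Icc (by
        refine continuous_const.mul (continuous_const.div (by fun_prop) fun x => by positivity)))
      ((ae_restrict_iff' measurableSet_Icc).2 (Filter.Eventually.of_forall fun x hx => ?_))
    calc KSOOdd n x y ^ 2 ≤ 2 * M ^ 2 / (1 + (M * (x - y)) ^ 2) :=
          KSOOdd_sq_le n ⟨by linarith [hx.1], by linarith [hx.2]⟩ hy
      _ = 2 * M * (M / (1 + (M * (x - y)) ^ 2)) := by ring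
  have hS : MeasurableSet (Set.Icc (0 : ℝ) (1 / 2) \ Set.Icc a b) :=
    measurableSet_Icc.diff measurableSet_Icc
  calc _ ≤ ∫ y in Set.Icc (0 : ℝ) (1 / 2) \ Set.Icc a b,
          2 * M * (arctan (M * (b - y)) - arctan (M * (a - y))) :=
        integral_mono_of_nonneg (Filter.Eventually.of_forall fun _ => setIntegral_nonneg
          measurableSet_Icc fun _ _ => sq_nonneg _)
          ((Continuous.integrableOn_Icc (by fun_prop)).mono_set Set.sdiff_subset)
          ((ae_restrict_iff' hS).2 (Filter.Eventually.of_forall fun y hy => hinner y hy.1))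
    _ ≤ 2 * M * (2 * ((π / 2 + log (1 + M * (b - a))) / M)) := by
        rw [integral_const_mul]
        gcongr
        exact setIntegral_Icc_diff_Icc_arctan_sub_le hM ha hab hb
    _ = 4 * (π / 2 + log (1 + M * (b - a))) := by field_simp; ring

theorem pi_div_two_add_log_one_add_two_mul_le {s : ℝ} (hs : 0 ≤ s) :
    π / 2 + log (1 + 2 * s) ≤ 5 * log (2 + s) := by
  have hlog2 : log 2 ≤ log (2 + s) := log_le_log two_pos (by linarith)
  have hsq : log (1 + 2 * s) ≤ 2 * log (2 + s) := by
    rw [← log_rpow (by linarith)]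
    exact log_le_log (by linarith) (by norm_cast; nlinarith)
  linarith [pi_lt_d2, log_two_gt_d9]

/-- **Eigenvalue count estimates for `SO(2n+1)`.** There is an absolute constant `C > 0`
such that for every `n ≥ 1` and every interval `I = [a,b] ⊆ [0,1/2]`:
(i)  `|∫_I K_{SO(2n+1)}(x,x) dx − 2n·|I|| ≤ C`, and
(ii) `∫_{[0,1/2]∖I} ∫_I K_{SO(2n+1)}(x,y)² dx dy ≤ C·log(2 + 2n·|I|)`. -/
theorem SO_odd_kernel_integrals :
    ∃ C : ℝ, 0 < C ∧ ∀ (n : ℕ), 1 ≤ n → ∀ a b : ℝ,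
      0 ≤ a → a ≤ b → b ≤ 1 / 2 →
      |(∫ x in a..b, KSOOdd n x x) - 2 * (n : ℝ) * (b - a)| ≤ C ∧
      (∫ y in Set.Icc (0 : ℝ) (1 / 2) \ Set.Icc a b, ∫ x in Set.Icc a b, (KSOOdd n x y) ^ 2)
        ≤ C * Real.log (2 + 2 * (n : ℝ) * (b - a)) := by
  refine ⟨20, by norm_num, fun n hn a b ha hab hb => ⟨?_, ?_⟩⟩
  · exact (abs_integral_KSOOdd_self_sub_le n ha hab hb).trans (by norm_num)
  · have hs : 0 ≤ 2 * (n : ℝ) * (b - a) := mul_nonneg (by positivity) (sub_nonneg.2 hab)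
    calc _ ≤ 4 * (π / 2 + log (1 + 2 * (2 * n * (b - a)))) := by
          convert setIntegral_Icc_diff_Icc_setIntegral_KSOOdd_sq_le hn ha hab hb using 4; ring
      _ ≤ 20 * log (2 + 2 * n * (b - a)) := by
          linarith [pi_div_two_add_log_one_add_two_mul_le hs]
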